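/- arXiv:2504.03124 — 3 statements merged into one kernel-verified Lean document; each statement's English description precedes it below -/
import Mathlib

section
/- For every real number α < -1/2 there exists a constant C_α > 0 such that for all 0 ≤ a ≤ b ≤ π, the integral ∫_a^b (cos h - cos b)^(-α) · h dh ≤ C_α. -/
open Real MeasureTheory intervalIntegral

theorem stmt_0 (α : ℝ) (hα : α < -(1/2 : ℝ)) :
    ∃ C : ℝ, 0 < C ∧ ∀ a b : ℝ, 0 ≤ a → a ≤ b → b ≤ π →
      ∫ h in a..b, (Real.cos h - Real.cos b) ^ (-α) * h ≤ C := by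
  have hexp : (0:ℝ) ≤ -α := by linarith
  refine ⟨(2:ℝ) ^ (-α) * π * π + 1, ?_, ?_⟩
  · have h2 : (0:ℝ) < (2:ℝ) ^ (-α) := Real.rpow_pos_of_pos (by norm_num) _
    have := Real.pi_pos
    positivity
  · intro a b ha hab hb
    have hbound : ∀ x ∈ Set.uIoc a b,
        ‖(Real.cos x - Real.cos b) ^ (-α) * x‖ ≤ (2:ℝ) ^ (-α) * π := by
      intro x hx
      rw [Set.uIoc_of_le hab] at hx
      have hx0 : 0 < x := lt_of_le_of_lt ha hx.1
      have hxb : x ≤ b := hx.2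
      have hxpi : x ≤ π := hxb.trans hb
      have hc : Real.cos b ≤ Real.cos x :=
        Real.cos_le_cos_of_nonneg_of_le_pi (le_of_lt hx0) hb hxb
      have hc2 : Real.cos x - Real.cos b ≤ 2 := by
        have := Real.neg_one_le_cos b
        have := Real.cos_le_one x
        linarith
      rw [norm_mul]
      have A : ‖(Real.cos x - Real.cos b) ^ (-α)‖ ≤ (2:ℝ) ^ (-α) := by
        rw [Real.norm_eq_abs, abs_of_nonneg (Real.rpow_nonneg (by linarith) _)]
        exact Real.rpow_le_rpow (by linarith) hc2 hexp
      have B : ‖x‖ ≤ π := by rw [Real.norm_eq_abs, abs_of_pos hx0]; exact hxpi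
      exact mul_le_mul A B (norm_nonneg _) (Real.rpow_nonneg (by norm_num) _)
    have h1 : ‖∫ h in a..b, (Real.cos h - Real.cos b) ^ (-α) * h‖ ≤
        (2:ℝ) ^ (-α) * π * |b - a| :=
      intervalIntegral.norm_integral_le_of_norm_le_const hbound
    have h2 : |b - a| ≤ π := by
      rw [abs_of_nonneg (by linarith)]; linarith
    have h3 : (2:ℝ) ^ (-α) * π * |b - a| ≤ (2:ℝ) ^ (-α) * π * π := by
      have h2p : (0:ℝ) < (2:ℝ) ^ (-α) := Real.rpow_pos_of_pos (by norm_num) _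
      have := Real.pi_pos
      gcongr
    calc ∫ h in a..b, (Real.cos h - Real.cos b) ^ (-α) * h
        ≤ ‖∫ h in a..b, (Real.cos h - Real.cos b) ^ (-α) * h‖ := le_abs_self _
      _ ≤ (2:ℝ) ^ (-α) * π * π := h1.trans h3
      _ ≤ (2:ℝ) ^ (-α) * π * π + 1 := by linarith
end

section
/- For every ε with 1/2 < ε < 1 and every integer n ≥ 3, there is a constant C (depending on ε and n) such that for all A with 0 < A < 1 and β = (n-2)/2, the integral ∫_{2A}^{1+A} h^{1-n} · (2·sinh((h+A)/2)·sinh((h-A)/2))^{β-ε} dh ≤ C·A^{-2ε}. -/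
open Real MeasureTheory intervalIntegral

lemma sinh_le_mul_exp {t : ℝ} (ht : 0 ≤ t) : Real.sinh t ≤ t * Real.exp t := by
  rw [Real.sinh_eq]
  have h2 : Real.exp (-t) = Real.exp t * Real.exp (-(2*t)) := by
    rw [← Real.exp_add]; ring_nf
  nlinarith [Real.exp_pos t, Real.add_one_le_exp (-(2*t))]

set_option maxHeartbeats 1000000 in
theorem stmt_5 (ε : ℝ) (hε1 : 1/2 < ε) (hε2 : ε < 1) (n : ℕ) (hn : 3 ≤ n) :
    ∃ C : ℝ, 0 < C ∧ ∀ A : ℝ, 0 < A → A < 1 →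
      ∫ h in (2 * A)..(1 + A),
          h ^ (1 - (n : ℝ)) *
            (2 * Real.sinh ((h + A) / 2) * Real.sinh ((h - A) / 2)) ^ (((n : ℝ) - 2) / 2 - ε)
        ≤ C * A ^ (-2 * ε) := by
  set p : ℝ := ((n : ℝ) - 2) / 2 - ε with hpdef
  set K : ℝ := Real.exp 1 ^ (2 * p) + 2 ^ (-(2 * p)) with hKdef
  have hKpos : 0 < K := by positivity
  have hεpos : 0 < ε := by linarith
  refine ⟨K / (2 * ε), by positivity, ?_⟩
  intro A hA0 hA1
  have hab : 2 * A ≤ 1 + A := by linarith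
  have h2A : 0 < 2 * A := by linarith
  -- pointwise bound
  have hpt : ∀ x ∈ Set.Icc (2 * A) (1 + A),
      x ^ (1 - (n : ℝ)) * (2 * Real.sinh ((x + A) / 2) * Real.sinh ((x - A) / 2)) ^ p
        ≤ K * x ^ (-1 - 2 * ε) := by
    intro x hx
    obtain ⟨hx1, hx2⟩ := hx
    have hx0 : 0 < x := lt_of_lt_of_le h2A hx1
    set B := 2 * Real.sinh ((x + A) / 2) * Real.sinh ((x - A) / 2) with hBdef
    have hs1 : (x + A) / 2 ≤ Real.sinh ((x + A) / 2) :=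
      Real.self_le_sinh_iff.mpr (by linarith)
    have hs2 : (x - A) / 2 ≤ Real.sinh ((x - A) / 2) :=
      Real.self_le_sinh_iff.mpr (by linarith)
    have hs1' : 0 < Real.sinh ((x + A) / 2) := lt_of_lt_of_le (by linarith) hs1
    have hs2' : 0 < Real.sinh ((x - A) / 2) := lt_of_lt_of_le (by linarith) hs2
    have hu1 : Real.sinh ((x + A) / 2) ≤ (x + A) / 2 * Real.exp ((x + A) / 2) :=
      sinh_le_mul_exp (by linarith)
    have hu2 : Real.sinh ((x - A) / 2) ≤ (x - A) / 2 * Real.exp ((x - A) / 2) :=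
      sinh_le_mul_exp (by linarith)
    have hlow : (x / 2) ^ (2 : ℕ) ≤ B := by nlinarith
    have hexp : Real.exp ((x + A) / 2) * Real.exp ((x - A) / 2) = Real.exp x := by
      rw [← Real.exp_add]; ring_nf
    have hexple : Real.exp x ≤ Real.exp 1 * Real.exp 1 := by
      rw [← Real.exp_add]
      exact Real.exp_le_exp.mpr (by linarith)
    have hup : B ≤ (Real.exp 1 * x) ^ (2 : ℕ) := by
      have h1 : B ≤ (x + A) / 2 * Real.exp ((x + A) / 2) *
          ((x - A) / 2 * Real.exp ((x - A) / 2)) * 2 := by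
        nlinarith [Real.exp_pos ((x + A) / 2), Real.exp_pos ((x - A) / 2),
          mul_le_mul hu1 hu2 hs2'.le (by positivity)]
      have h2 : (x + A) / 2 * Real.exp ((x + A) / 2) *
          ((x - A) / 2 * Real.exp ((x - A) / 2)) * 2 = (x + A) * (x - A) / 2 * Real.exp x := by
        rw [← hexp]; ring
      have h3 : (x + A) * (x - A) / 2 * Real.exp x ≤ x ^ (2 : ℕ) * (Real.exp 1 * Real.exp 1) := by
        nlinarith [Real.exp_pos x, mul_nonneg (sq_nonneg A) (Real.exp_pos x).le,
          mul_le_mul_of_nonneg_left hexple (by positivity : (0:ℝ) ≤ x ^ 2 / 2)]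
      calc B ≤ (x + A) * (x - A) / 2 * Real.exp x := by rw [← h2]; exact h1
        _ ≤ x ^ (2 : ℕ) * (Real.exp 1 * Real.exp 1) := h3
        _ = (Real.exp 1 * x) ^ (2 : ℕ) := by ring
    have hBpos : 0 < B := lt_of_lt_of_le (by positivity) hlow
    have hBp : B ^ p ≤ K * x ^ (2 * p) := by
      rcases le_or_gt p 0 with hp0 | hp0
      · have h1 : B ^ p ≤ ((x / 2) ^ (2 : ℕ)) ^ p := by
          apply Real.rpow_le_rpow_of_nonpos (by positivity) hlow hp0
        have h2 : ((x / 2) ^ (2 : ℕ)) ^ p = (x / 2) ^ (2 * p) := by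
          rw [← Real.rpow_natCast (x / 2) 2, ← Real.rpow_mul (by positivity)]
          norm_num
        have h3 : (x / 2) ^ (2 * p) = x ^ (2 * p) * 2 ^ (-(2 * p)) := by
          rw [Real.div_rpow hx0.le (by norm_num), Real.rpow_neg (by norm_num)]
          ring
        have h4 : (2 : ℝ) ^ (-(2 * p)) ≤ K := by
          rw [hKdef]; nlinarith [Real.rpow_pos_of_pos (Real.exp_pos 1) (2 * p)]
        calc B ^ p ≤ x ^ (2 * p) * 2 ^ (-(2 * p)) := by rw [← h3, ← h2]; exact h1
          _ ≤ x ^ (2 * p) * K := by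
              exact mul_le_mul_of_nonneg_left h4 (Real.rpow_nonneg hx0.le _)
          _ = K * x ^ (2 * p) := by ring
      · have h1 : B ^ p ≤ ((Real.exp 1 * x) ^ (2 : ℕ)) ^ p :=
          Real.rpow_le_rpow hBpos.le hup hp0.le
        have h2 : ((Real.exp 1 * x) ^ (2 : ℕ)) ^ p = Real.exp 1 ^ (2 * p) * x ^ (2 * p) := by
          rw [← Real.rpow_natCast (Real.exp 1 * x) 2, ← Real.rpow_mul (by positivity),
            show ((2 : ℕ) : ℝ) * p = 2 * p by norm_num,
            Real.mul_rpow (Real.exp_pos 1).le hx0.le]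
        have h4 : Real.exp 1 ^ (2 * p) ≤ K := by
          rw [hKdef]; nlinarith [Real.rpow_pos_of_pos (by norm_num : (0:ℝ) < 2) (-(2 * p))]
        calc B ^ p ≤ Real.exp 1 ^ (2 * p) * x ^ (2 * p) := by rw [← h2]; exact h1
          _ ≤ K * x ^ (2 * p) := by
              exact mul_le_mul_of_nonneg_right h4 (Real.rpow_nonneg hx0.le _)
    calc x ^ (1 - (n : ℝ)) * B ^ p ≤ x ^ (1 - (n : ℝ)) * (K * x ^ (2 * p)) :=
          mul_le_mul_of_nonneg_left hBp (Real.rpow_nonneg hx0.le _)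
      _ = K * (x ^ (1 - (n : ℝ)) * x ^ (2 * p)) := by ring
      _ = K * x ^ (1 - (n : ℝ) + 2 * p) := by rw [← Real.rpow_add hx0]
      _ = K * x ^ (-1 - 2 * ε) := by
          congr 1
          rw [hpdef]; ring
  -- integrability
  have huIcc : Set.uIcc (2 * A) (1 + A) = Set.Icc (2 * A) (1 + A) := Set.uIcc_of_le hab
  have hfc : ContinuousOn (fun x : ℝ =>
      x ^ (1 - (n : ℝ)) * (2 * Real.sinh ((x + A) / 2) * Real.sinh ((x - A) / 2)) ^ p)
      (Set.uIcc (2 * A) (1 + A)) := by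
    rw [huIcc]
    apply ContinuousOn.mul
    · apply ContinuousOn.rpow_const continuousOn_id
      intro x hx
      exact Or.inl (ne_of_gt (lt_of_lt_of_le h2A hx.1))
    · apply ContinuousOn.rpow_const
      · fun_prop
      · intro x hx
        left
        have hx0 : 0 < x := lt_of_lt_of_le h2A hx.1
        have hs1' : 0 < Real.sinh ((x + A) / 2) := by
          rw [Real.sinh_pos_iff]; linarith [hx.1]
        have hs2' : 0 < Real.sinh ((x - A) / 2) := by
          rw [Real.sinh_pos_iff]; linarith [hx.1]
        positivity
  have hgc : ContinuousOn (fun x : ℝ => K * x ^ (-1 - 2 * ε)) (Set.uIcc (2 * A) (1 + A)) := by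
    rw [huIcc]
    apply ContinuousOn.mul continuousOn_const
    apply ContinuousOn.rpow_const continuousOn_id
    intro x hx
    exact Or.inl (ne_of_gt (lt_of_lt_of_le h2A hx.1))
  have hf : IntervalIntegrable (fun x : ℝ =>
      x ^ (1 - (n : ℝ)) * (2 * Real.sinh ((x + A) / 2) * Real.sinh ((x - A) / 2)) ^ p)
      volume (2 * A) (1 + A) := hfc.intervalIntegrable
  have hg : IntervalIntegrable (fun x : ℝ => K * x ^ (-1 - 2 * ε))
      volume (2 * A) (1 + A) := hgc.intervalIntegrable
  have hmono := intervalIntegral.integral_mono_on hab hf hg hpt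
  have hnotmem : (0 : ℝ) ∉ Set.uIcc (2 * A) (1 + A) := by
    rw [huIcc]
    intro h
    exact absurd h.1 (by linarith)
  have hrpow : ∫ x in (2 * A)..(1 + A), x ^ (-1 - 2 * ε) =
      ((1 + A) ^ (-1 - 2 * ε + 1) - (2 * A) ^ (-1 - 2 * ε + 1)) / (-1 - 2 * ε + 1) :=
    integral_rpow (Or.inr ⟨by intro h; linarith [h], hnotmem⟩)
  have hgval : ∫ x in (2 * A)..(1 + A), K * x ^ (-1 - 2 * ε) =
      K * (((1 + A) ^ (-2 * ε) - (2 * A) ^ (-2 * ε)) / (-2 * ε)) := by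
    rw [intervalIntegral.integral_const_mul, hrpow,
      show -1 - 2 * ε + 1 = -2 * ε by ring]
  have h1 : (1 + A) ^ (-2 * ε) ≤ (2 * A) ^ (-2 * ε) :=
    Real.rpow_le_rpow_of_nonpos h2A hab (by linarith)
  have h2 : (2 * A) ^ (-2 * ε) ≤ A ^ (-2 * ε) := by
    rw [Real.mul_rpow (by norm_num) hA0.le]
    nlinarith [Real.rpow_le_one_of_one_le_of_nonpos (by norm_num : (1:ℝ) ≤ 2)
        (by linarith : -2 * ε ≤ 0), Real.rpow_pos_of_pos hA0 (-2 * ε),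
      Real.rpow_pos_of_pos (by norm_num : (0:ℝ) < 2) (-2 * ε)]
  have h3 : K * (((1 + A) ^ (-2 * ε) - (2 * A) ^ (-2 * ε)) / (-2 * ε)) ≤
      K / (2 * ε) * A ^ (-2 * ε) := by
    have hnn : 0 ≤ (1 + A) ^ (-2 * ε) := Real.rpow_nonneg (by linarith) _
    have key : (2 * A) ^ (-2 * ε) - (1 + A) ^ (-2 * ε) ≤ A ^ (-2 * ε) := by linarith
    calc K * (((1 + A) ^ (-2 * ε) - (2 * A) ^ (-2 * ε)) / (-2 * ε))
        = K * (((2 * A) ^ (-2 * ε) - (1 + A) ^ (-2 * ε)) / (2 * ε)) := by ring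
      _ ≤ K * (A ^ (-2 * ε) / (2 * ε)) := by
          gcongr
      _ = K / (2 * ε) * A ^ (-2 * ε) := by ring
  calc _ ≤ ∫ x in (2 * A)..(1 + A), K * x ^ (-1 - 2 * ε) := hmono
    _ = K * (((1 + A) ^ (-2 * ε) - (2 * A) ^ (-2 * ε)) / (-2 * ε)) := hgval
    _ ≤ K / (2 * ε) * A ^ (-2 * ε) := h3
end

section
/- Let 1/2 < ε < 1 and n ≥ 3 an integer, β = (n-2)/2. Suppose φ: (0,∞) → [0,∞) satisfies φ(h) ≤ C₀ · e^{-hβ} · (1 + h^{(1-n)/2}) for all h > 0. Then there is a constant C (depending on ε, n, C₀) such that for every 𝒜 ≥ 1, ∫_𝒜^∞ φ(h) · (cosh h - cosh 𝒜)^{β - ε} dh ≤ C · (cosh 𝒜 - 1)^{-ε}. -/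
open Real MeasureTheory

private lemma shift_eq (F : ℝ → ℝ) (A : ℝ) :
    ∫ h in Set.Ioi A, F (h - A) = ∫ t in Set.Ioi (0:ℝ), F t := by
  have h1 : MeasurePreserving (fun x : ℝ => x - A) volume volume :=
    measurePreserving_sub_right volume A
  have h2 : MeasurableEmbedding (fun x : ℝ => x - A) :=
    (MeasurableEquiv.subRight A).measurableEmbedding
  have h3 := h1.setIntegral_preimage_emb h2 F (Set.Ioi 0)
  have h4 : (fun x : ℝ => x - A) ⁻¹' Set.Ioi 0 = Set.Ioi A := by
    ext x; simp [sub_pos]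
  rw [h4] at h3
  exact h3

private lemma shift_int {F : ℝ → ℝ} (hF : IntegrableOn F (Set.Ioi (0:ℝ))) (A : ℝ) :
    IntegrableOn (fun h => F (h - A)) (Set.Ioi A) := by
  have h1 : MeasurePreserving (fun x : ℝ => x - A) volume volume :=
    measurePreserving_sub_right volume A
  have h2 : MeasurableEmbedding (fun x : ℝ => x - A) :=
    (MeasurableEquiv.subRight A).measurableEmbedding
  have h3 := (h1.integrableOn_comp_preimage h2 (f := F) (s := Set.Ioi 0)).mpr hF
  have h4 : (fun x : ℝ => x - A) ⁻¹' Set.Ioi 0 = Set.Ioi A := by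
    ext x; simp [sub_pos]
  rw [h4] at h3
  exact h3

private lemma cosh_le_exp' {x : ℝ} (hx : 0 ≤ x) : Real.cosh x ≤ Real.exp x := by
  rw [Real.cosh_eq]
  have := Real.exp_le_exp.mpr (neg_le_self hx)
  linarith

theorem stmt_19 (ε : ℝ) (hε1 : 1/2 < ε) (hε2 : ε < 1) (n : ℕ) (hn : 3 ≤ n)
    (β : ℝ) (hβ : β = ((n : ℝ) - 2) / 2)
    (φ : ℝ → ℝ) (hφ0 : ∀ h, 0 ≤ φ h)
    (C₀ : ℝ) (hC₀ : 0 < C₀)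
    (hφ : ∀ h : ℝ, 0 < h → φ h ≤ C₀ * Real.exp (-h * β) * (1 + h ^ ((1 - (n : ℝ)) / 2))) :
    ∃ C : ℝ, 0 < C ∧ ∀ A : ℝ, 1 ≤ A →
      ∫ h in Set.Ioi A, φ h * (Real.cosh h - Real.cosh A) ^ (β - ε)
        ≤ C * (Real.cosh A - 1) ^ (-ε) := by
  have hn3 : (3:ℝ) ≤ (n:ℝ) := by exact_mod_cast hn
  have hβ2 : 1/2 ≤ β := by rw [hβ]; linarith
  have hεpos : (0:ℝ) < ε := by linarith
  -- bound on φ for h ≥ 1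
  have hφ2 : ∀ h : ℝ, 1 ≤ h → φ h ≤ 2 * C₀ * Real.exp (-(h * β)) := by
    intro h hh
    have h0 : (0:ℝ) < h := by linarith
    have h1 := hφ h h0
    have h2 : h ^ ((1 - (n:ℝ)) / 2) ≤ 1 :=
      Real.rpow_le_one_of_one_le_of_nonpos hh (by linarith)
    have h3 : (0:ℝ) < Real.exp (-(h * β)) := Real.exp_pos _
    calc φ h ≤ C₀ * Real.exp (-h * β) * (1 + h ^ ((1 - (n:ℝ)) / 2)) := h1
      _ ≤ C₀ * Real.exp (-h * β) * 2 := by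
          apply mul_le_mul_of_nonneg_left (by linarith) (by positivity)
      _ = 2 * C₀ * Real.exp (-(h * β)) := by rw [neg_mul]; ring
  obtain ⟨K, F, hK, hFnn, hFint, hbound⟩ :
      ∃ (K : ℝ) (F : ℝ → ℝ), 0 < K ∧ (∀ t ∈ Set.Ioi (0:ℝ), 0 ≤ F t) ∧
        IntegrableOn F (Set.Ioi (0:ℝ)) ∧
        ∀ A : ℝ, 1 ≤ A → ∀ h ∈ Set.Ioi A,
          φ h * (Real.cosh h - Real.cosh A) ^ (β - ε)
            ≤ K * Real.exp (-(ε * A)) * F (h - A) := by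
    rcases le_or_gt ε β with hc | hc
    · -- easy case: nonnegative exponent
      refine ⟨2 * C₀, fun t => Real.exp (-ε * t), by positivity,
        fun t _ => Real.exp_nonneg _, exp_neg_integrableOn_Ioi 0 hεpos, ?_⟩
      intro A hA h hh
      have hhA : A < h := hh
      have h1 : (1:ℝ) ≤ h := by linarith
      have hch : Real.cosh A ≤ Real.cosh h := by
        rw [Real.cosh_le_cosh, abs_of_nonneg (by linarith), abs_of_nonneg (by linarith)]
        linarith
      have hce : Real.cosh h - Real.cosh A ≤ Real.exp h := by
        have k1 := cosh_le_exp' (show (0:ℝ) ≤ h by linarith)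
        have k2 : (1:ℝ) ≤ Real.cosh A := Real.one_le_cosh A
        linarith
      have hpow : (Real.cosh h - Real.cosh A) ^ (β - ε) ≤ Real.exp h ^ (β - ε) :=
        Real.rpow_le_rpow (sub_nonneg.2 hch) hce (by linarith)
      have e1 : Real.exp (-(h*β)) * Real.exp (h*(β-ε))
          = Real.exp (-(ε*A)) * Real.exp (-ε*(h-A)) := by
        rw [← Real.exp_add, ← Real.exp_add]; congr 1; ring
      calc φ h * (Real.cosh h - Real.cosh A) ^ (β - ε)
          ≤ (2*C₀*Real.exp (-(h*β))) * Real.exp h ^ (β - ε) :=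
            mul_le_mul (hφ2 h h1) hpow (Real.rpow_nonneg (sub_nonneg.2 hch) _) (by positivity)
        _ = 2*C₀ * (Real.exp (-(h*β)) * Real.exp (h*(β-ε))) := by
            rw [← Real.exp_mul]; ring
        _ = 2 * C₀ * Real.exp (-(ε*A)) * Real.exp (-ε*(h-A)) := by rw [e1]; ring
    · -- hard case: negative exponent
      have hc2 : Real.exp (-2:ℝ) < 1 := Real.exp_lt_one_iff.mpr (by norm_num)
      set c : ℝ := (1 - Real.exp (-2)) / 2 with hcdef
      have hcpos : 0 < c := by rw [hcdef]; linarith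
      have hsinh : ∀ x : ℝ, 1 ≤ x → c * Real.exp x ≤ Real.sinh x := by
        intro x hx
        rw [Real.sinh_eq]
        have k1 : Real.exp (-x) ≤ Real.exp (-2) * Real.exp x := by
          rw [← Real.exp_add]; exact Real.exp_le_exp.mpr (by linarith)
        have k2 : c * Real.exp x = (Real.exp x - Real.exp (-2) * Real.exp x) / 2 := by
          rw [hcdef]; ring
        rw [k2]; linarith
      refine ⟨2*C₀*c^(β-ε), fun t => t ^ (β-ε) * Real.exp (-((β+ε)/2) * t),
        by have := Real.rpow_pos_of_pos hcpos (β-ε); positivity,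
        fun t ht => mul_nonneg (Real.rpow_nonneg (le_of_lt ht) _) (Real.exp_nonneg _), ?_, ?_⟩
      · have hint := integrableOn_rpow_mul_exp_neg_mul_rpow (p := 1) (s := β - ε)
          (b := (β+ε)/2) (by linarith) one_pos (by linarith)
        simpa [Real.rpow_one] using hint
      intro A hA h hh
      have hhA : A < h := hh
      have h1 : (1:ℝ) ≤ h := by linarith
      have hch : Real.cosh A ≤ Real.cosh h := by
        rw [Real.cosh_le_cosh, abs_of_nonneg (by linarith), abs_of_nonneg (by linarith)]
        linarith
      have hu : (1:ℝ) ≤ (h+A)/2 := by linarith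
      have hv : (0:ℝ) < (h-A)/2 := by linarith
      have key : Real.cosh h - Real.cosh A
          = 2 * Real.sinh ((h+A)/2) * Real.sinh ((h-A)/2) := by
        have k1 := Real.cosh_add ((h+A)/2) ((h-A)/2)
        have k2 := Real.cosh_sub ((h+A)/2) ((h-A)/2)
        have e1 : (h+A)/2 + (h-A)/2 = h := by ring
        have e2 : (h+A)/2 - (h-A)/2 = A := by ring
        rw [e1] at k1; rw [e2] at k2; linarith
      have s1 := hsinh _ hu
      have s2 : (h-A)/2 ≤ Real.sinh ((h-A)/2) := (Real.self_lt_sinh_iff.mpr hv).le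
      have hD : 0 < c * Real.exp ((h+A)/2) * (h - A) :=
        mul_pos (mul_pos hcpos (Real.exp_pos _)) (by linarith)
      have hDle : c * Real.exp ((h+A)/2) * (h - A) ≤ Real.cosh h - Real.cosh A := by
        rw [key]
        have m1 : (c * Real.exp ((h+A)/2)) * ((h-A)/2)
            ≤ Real.sinh ((h+A)/2) * Real.sinh ((h-A)/2) :=
          mul_le_mul s1 s2 hv.le (le_trans (by positivity) s1)
        have e3 : c * Real.exp ((h+A)/2) * (h - A)
            = 2 * ((c * Real.exp ((h+A)/2)) * ((h-A)/2)) := by ring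
        rw [e3]; linarith
      have hpow : (Real.cosh h - Real.cosh A) ^ (β-ε)
          ≤ (c * Real.exp ((h+A)/2) * (h - A)) ^ (β-ε) :=
        Real.rpow_le_rpow_of_nonpos hD hDle (by linarith)
      have hsplit : (c * Real.exp ((h+A)/2) * (h - A)) ^ (β-ε)
          = c ^ (β-ε) * Real.exp ((h+A)/2) ^ (β-ε) * (h - A) ^ (β-ε) := by
        rw [Real.mul_rpow (by positivity) (by linarith),
          Real.mul_rpow hcpos.le (Real.exp_nonneg _)]
      have e1 : Real.exp (-(h*β)) * Real.exp ((h+A)/2*(β-ε))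
          = Real.exp (-(ε*A)) * Real.exp (-((β+ε)/2) * (h-A)) := by
        rw [← Real.exp_add, ← Real.exp_add]; congr 1; ring
      calc φ h * (Real.cosh h - Real.cosh A) ^ (β - ε)
          ≤ (2*C₀*Real.exp (-(h*β))) * ((c * Real.exp ((h+A)/2) * (h - A)) ^ (β-ε)) :=
            mul_le_mul (hφ2 h h1) hpow (Real.rpow_nonneg (sub_nonneg.2 hch) _) (by positivity)
        _ = 2*C₀*c^(β-ε) * ((h-A)^(β-ε)
              * (Real.exp (-(h*β)) * Real.exp ((h+A)/2*(β-ε)))) := by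
            rw [hsplit, ← Real.exp_mul]; ring
        _ = 2*C₀*c^(β-ε) * Real.exp (-(ε*A))
              * ((h-A) ^ (β-ε) * Real.exp (-((β+ε)/2) * (h-A))) := by
            rw [e1]; ring
  set M := ∫ t in Set.Ioi (0:ℝ), F t with hM
  have hM0 : 0 ≤ M := setIntegral_nonneg measurableSet_Ioi hFnn
  refine ⟨K * M + 1, by positivity, fun A hA => ?_⟩
  have hcosh1 : 0 < Real.cosh A - 1 :=
    sub_pos.2 (Real.one_lt_cosh.mpr (by intro h; rw [h] at hA; norm_num at hA))
  have hpowA : 0 < (Real.cosh A - 1) ^ (-ε) := Real.rpow_pos_of_pos hcosh1 _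
  have hexpA : Real.exp (-(ε * A)) ≤ (Real.cosh A - 1) ^ (-ε) := by
    have h1 : Real.cosh A - 1 ≤ Real.exp A := by
      have := cosh_le_exp' (show (0:ℝ) ≤ A by linarith); linarith
    have h2 := Real.rpow_le_rpow_of_nonpos hcosh1 h1 (neg_nonpos.2 hεpos.le)
    calc Real.exp (-(ε * A)) = Real.exp A ^ (-ε) := by
          rw [← Real.exp_mul]; congr 1; ring
      _ ≤ _ := h2
  have hg_int : Integrable (fun h => K * Real.exp (-(ε * A)) * F (h - A))
      (volume.restrict (Set.Ioi A)) := (shift_int hFint A).const_mul _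
  have hf_nn : 0 ≤ᵐ[volume.restrict (Set.Ioi A)]
      fun h => φ h * (Real.cosh h - Real.cosh A) ^ (β - ε) := by
    refine (ae_restrict_iff' measurableSet_Ioi).mpr (ae_of_all _ fun h hh => ?_)
    have hch : Real.cosh A ≤ Real.cosh h := by
      rw [Real.cosh_le_cosh, abs_of_nonneg (by linarith), abs_of_nonneg]
      · exact le_of_lt hh
      · have := Set.mem_Ioi.mp hh; linarith
    exact mul_nonneg (hφ0 h) (Real.rpow_nonneg (sub_nonneg.2 hch) _)
  have hf_le : (fun h => φ h * (Real.cosh h - Real.cosh A) ^ (β - ε))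
      ≤ᵐ[volume.restrict (Set.Ioi A)]
      fun h => K * Real.exp (-(ε * A)) * F (h - A) :=
    (ae_restrict_iff' measurableSet_Ioi).mpr (ae_of_all _ (hbound A hA))
  calc ∫ h in Set.Ioi A, φ h * (Real.cosh h - Real.cosh A) ^ (β - ε)
      ≤ ∫ h in Set.Ioi A, K * Real.exp (-(ε * A)) * F (h - A) :=
        integral_mono_of_nonneg hf_nn hg_int hf_le
    _ = K * Real.exp (-(ε * A)) * ∫ h in Set.Ioi A, F (h - A) := by
        rw [integral_const_mul]
    _ = K * Real.exp (-(ε * A)) * M := by rw [shift_eq F A]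
    _ ≤ (K * M + 1) * (Real.cosh A - 1) ^ (-ε) := by
        nlinarith [mul_le_mul_of_nonneg_left hexpA (mul_nonneg hK.le hM0), hpowA,
          Real.exp_pos (-(ε * A))]
end
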